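/- Let r : C1 → C2 be an F-linear exact (triangulated) functor between F-linear triangulated categories equipped with weight structures. Assume: (1) the weight structure on C1 is bounded; (2) the heart C_{1,w=0} is semi-primary and pseudo-Abelian; (3) r is weight exact; (4) the induced functor r_{w=0} on hearts is full; (5) r_{w=0} is conservative. Then for any M ∈ C1 and any integer α: M lies in C_{1,w≤α} if and only if r(M) lies in C_{2,w≤α}. -/

import Mathlib

open CategoryTheory CategoryTheory.Limits CategoryTheory.Pretriangulated

namespace Paper

/-- A morphism `f : X ⟶ Y` belongs to the radical of a preadditive category if,
for every `g : Y ⟶ X`, the endomorphism `𝟙 X - g ∘ f` is invertible. -/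
def InRadical {C : Type*} [Category C] [Preadditive C] {X Y : C} (f : X ⟶ Y) : Prop :=
  ∀ g : Y ⟶ X, IsIso (𝟙 X - f ≫ g)

/-- The Jacobson radical of a (possibly noncommutative) ring, as a two-sided ideal. -/
def ringRadical (R : Type*) [Ring R] : TwoSidedIdeal R :=
  TwoSidedIdeal.jacobson ⊥

/-- A ring is semi-primary if its (Jacobson) radical is nilpotent and the quotient by
the radical is a semisimple ring. -/
def IsSemiprimaryRing (R : Type*) [Ring R] : Prop :=
  IsSemisimpleRing (ringRadical R).ringCon.Quotient ∧
    ∃ n : ℕ, ∀ f : Fin n → R, (∀ i, f i ∈ ringRadical R) → (List.ofFn f).prod = 0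

/-- A class of objects of a preadditive category is semi-primary (André–Kahn) if the
endomorphism ring of each of its objects is a semi-primary ring; for an object `X`,
the radical ideal `rad(X,X)` is exactly the Jacobson radical of `End X`. -/
def SemiprimaryOn {C : Type*} [Category C] [Preadditive C] (P : Set C) : Prop :=
  ∀ X : C, X ∈ P → IsSemiprimaryRing (CategoryTheory.End X)

/-- A class of objects is pseudo-Abelian (idempotent complete) if every idempotent
endomorphism of one of its objects splits through an object of the class. -/
def PseudoAbelianOn {C : Type*} [Category C] [Preadditive C] (P : Set C) : Prop :=
  ∀ X : C, X ∈ P → ∀ e : X ⟶ X, e ≫ e = e →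
    ∃ (Y : C) (_ : Y ∈ P) (p : X ⟶ Y) (i : Y ⟶ X), p ≫ i = e ∧ i ≫ p = 𝟙 Y

variable (C : Type*) [Category C] [Preadditive C] [HasZeroObject C] [HasShift C ℤ]
  [∀ n : ℤ, (CategoryTheory.shiftFunctor C n).Additive] [Pretriangulated C]

/-- A weight structure on a pretriangulated category: classes `le = C_{w≤0}` and
`ge = C_{w≥0}`, additive (containing zero objects, closed under finite direct sums)
and closed under retracts, with `C_{w≤0} ⊆ C_{w≤1}`, `C_{w≥1} ⊆ C_{w≥0}`,
orthogonality, and existence of weight decompositions. -/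
structure WeightStructure where
  le : Set C
  ge : Set C
  le_retract : ∀ {X Y : C} (i : X ⟶ Y) (p : Y ⟶ X), i ≫ p = 𝟙 X → Y ∈ le → X ∈ le
  ge_retract : ∀ {X Y : C} (i : X ⟶ Y) (p : Y ⟶ X), i ≫ p = 𝟙 X → Y ∈ ge → X ∈ ge
  le_zero : ∀ X : C, IsZero X → X ∈ le
  ge_zero : ∀ X : C, IsZero X → X ∈ ge
  le_add : ∀ {X Y : C} (b : BinaryBicone X Y), b.IsBilimit → X ∈ le → Y ∈ le → b.pt ∈ le
  ge_add : ∀ {X Y : C} (b : BinaryBicone X Y), b.IsBilimit → X ∈ ge → Y ∈ ge → b.pt ∈ ge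
  le_shift : ∀ X : C, X ∈ le → X⟦(-1 : ℤ)⟧ ∈ le
  ge_shift : ∀ X : C, X ∈ ge → X⟦(1 : ℤ)⟧ ∈ ge
  orthogonal : ∀ {X Y : C}, X ∈ le → Y⟦(-1 : ℤ)⟧ ∈ ge → ∀ f : X ⟶ Y, f = 0
  exists_decomp : ∀ M : C, ∃ (A B : C) (f : A ⟶ M) (g : M ⟶ B) (h : B ⟶ A⟦(1 : ℤ)⟧),
    (Triangle.mk f g h ∈ distTriang C) ∧ A ∈ le ∧ B⟦(-1 : ℤ)⟧ ∈ ge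

namespace WeightStructure

variable {C} (w : WeightStructure C)

/-- `C_{w ≤ n} := C_{w ≤ 0}[n]`. -/
def leN (n : ℤ) : Set C := {X : C | X⟦-n⟧ ∈ w.le}

/-- `C_{w ≥ n} := C_{w ≥ 0}[n]`. -/
def geN (n : ℤ) : Set C := {X : C | X⟦-n⟧ ∈ w.ge}

/-- The heart `C_{w = 0} = C_{w ≤ 0} ∩ C_{w ≥ 0}`. -/
def heart : Set C := w.leN 0 ∩ w.geN 0

/-- The weight structure is bounded if every object lies in
`C_{w ≥ m} ∩ C_{w ≤ n}` for some integers `m ≤ n`. -/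
def Bounded : Prop := ∀ M : C, ∃ m n : ℤ, m ≤ n ∧ M ∈ w.geN m ∧ M ∈ w.leN n

end WeightStructure

/-- A weight filtration of `M` concentrated at `n`: an exact triangle
`M_{≤ n-1} ⟶ M ⟶ M_{≥ n} ⟶(δ) M_{≤ n-1}[1]` with the two outer terms in
`C_{w ≤ n-1}` and `C_{w ≥ n}` respectively. -/
def IsWeightFiltrationAt {C : Type*} [Category C] [Preadditive C] [HasZeroObject C]
    [HasShift C ℤ] [∀ n : ℤ, (CategoryTheory.shiftFunctor C n).Additive] [Pretriangulated C]
    (w : WeightStructure C) (n : ℤ) {A M B : C}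
    (f : A ⟶ M) (g : M ⟶ B) (δ : B ⟶ A⟦(1 : ℤ)⟧) : Prop :=
  (Triangle.mk f g δ ∈ distTriang C) ∧ A ∈ w.leN (n - 1) ∧ B ∈ w.geN n

/-- A minimal weight filtration concentrated at `n`: a weight filtration concentrated
at `n` whose connecting morphism lies in the radical. -/
def IsMinimalWeightFiltrationAt {C : Type*} [Category C] [Preadditive C] [HasZeroObject C]
    [HasShift C ℤ] [∀ n : ℤ, (CategoryTheory.shiftFunctor C n).Additive] [Pretriangulated C]
    (w : WeightStructure C) (n : ℤ) {A M B : C}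
    (f : A ⟶ M) (g : M ⟶ B) (δ : B ⟶ A⟦(1 : ℤ)⟧) : Prop :=
  IsWeightFiltrationAt w n f g δ ∧ InRadical δ

/-- `M` is without weights `α, α+1, …, β` if it admits a weight filtration avoiding
these weights. -/
def WithoutWeights {C : Type*} [Category C] [Preadditive C] [HasZeroObject C]
    [HasShift C ℤ] [∀ n : ℤ, (CategoryTheory.shiftFunctor C n).Additive] [Pretriangulated C]
    (w : WeightStructure C) (α β : ℤ) (M : C) : Prop :=
  ∃ (A B : C) (f : A ⟶ M) (g : M ⟶ B) (δ : B ⟶ A⟦(1 : ℤ)⟧),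
    (Triangle.mk f g δ ∈ distTriang C) ∧ A ∈ w.leN (α - 1) ∧ B ∈ w.geN (β + 1)

/-- A functor is weight exact if it respects both classes of the weight structures. -/
def WeightExact {C₁ : Type*} [Category C₁] [Preadditive C₁] [HasZeroObject C₁] [HasShift C₁ ℤ]
    [∀ n : ℤ, (CategoryTheory.shiftFunctor C₁ n).Additive] [Pretriangulated C₁]
    {C₂ : Type*} [Category C₂] [Preadditive C₂] [HasZeroObject C₂] [HasShift C₂ ℤ]
    [∀ n : ℤ, (CategoryTheory.shiftFunctor C₂ n).Additive] [Pretriangulated C₂]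
    (w₁ : WeightStructure C₁) (w₂ : WeightStructure C₂) (r : C₁ ⥤ C₂) : Prop :=
  (∀ X : C₁, X ∈ w₁.le → r.obj X ∈ w₂.le) ∧ (∀ X : C₁, X ∈ w₁.ge → r.obj X ∈ w₂.ge)


/-!
Descending induction on the weight, starting from the bound provided by boundedness, reduces the
claim to: if `M ∈ C_{w≤0}` and `r M ∈ C_{w≤-1}` then `M ∈ C_{w≤-1}`. Take a weight decomposition
`A → M → B →δ A[1]` with `A ∈ C_{w≤-1}`, `B ∈ C_{w≥0}`; then `B` lies in the heart, and
`M ∈ C_{w≤-1}` as soon as `δ` is a monomorphism. After applying `r`, orthogonality kills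
`r M → r B`, so `r δ` has a retraction. Decomposing `A[1]` as `A' → A[1] →p H` with `H` in the
heart, that retraction kills `r A'` and hence factors through `r p`, so `r (δ ≫ p)` is a split
monomorphism between images of heart objects. Fullness and conservativity on the heart lift this
to a retraction of `δ ≫ p`.
-/

lemma distinguished_mk_comp_iso₂ {C : Type*} [Category C] [Preadditive C] [HasZeroObject C]
    [HasShift C ℤ] [∀ n : ℤ, (shiftFunctor C n).Additive] [Pretriangulated C] {X Y Z M : C}
    {f : X ⟶ Y} {g : Y ⟶ Z} {h : Z ⟶ X⟦(1 : ℤ)⟧} (hT : Triangle.mk f g h ∈ distTriang C)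
    (e : Y ≅ M) : Triangle.mk (f ≫ e.hom) (e.inv ≫ g) h ∈ distTriang C :=
  isomorphic_distinguished _ hT _ <| Triangle.isoMk _ _ (Iso.refl X) e.symm (Iso.refl Z)
    (by change (f ≫ e.hom) ≫ e.inv = 𝟙 X ≫ f; simp) (Category.comp_id _)
    (by change h ≫ (𝟙 X)⟦(1 : ℤ)⟧' = 𝟙 Z ≫ h; simp)

namespace WeightStructure

variable {C} (w : WeightStructure C)

lemma mem_le_of_iso {X Y : C} (e : X ≅ Y) (hY : Y ∈ w.le) : X ∈ w.le :=
  w.le_retract e.hom e.inv e.hom_inv_id hY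

lemma mem_ge_of_iso {X Y : C} (e : X ≅ Y) (hY : Y ∈ w.ge) : X ∈ w.ge :=
  w.ge_retract e.hom e.inv e.hom_inv_id hY

lemma mem_leN_of_retract {n : ℤ} {X Y : C} (i : X ⟶ Y) (p : Y ⟶ X) (h : i ≫ p = 𝟙 X)
    (hY : Y ∈ w.leN n) : X ∈ w.leN n :=
  w.le_retract (i⟦-n⟧') (p⟦-n⟧') (by simp [← Functor.map_comp, h]) hY

lemma mem_leN_of_iso {n : ℤ} {X Y : C} (e : X ≅ Y) (hY : Y ∈ w.leN n) : X ∈ w.leN n :=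
  w.mem_leN_of_retract e.hom e.inv e.hom_inv_id hY

lemma mem_leN_iff_shift (X : C) {n k m : ℤ} (h : n + k = m) :
    X ∈ w.leN n ↔ X⟦k⟧ ∈ w.leN m := by
  have e : X⟦-n⟧ ≅ X⟦k⟧⟦-m⟧ := (shiftFunctorAdd' C k (-m) (-n) (by omega)).app X
  exact ⟨w.mem_le_of_iso e.symm, w.mem_le_of_iso e⟩

lemma leN_mono {X : C} {n m : ℤ} (h : n ≤ m) (hX : X ∈ w.leN n) : X ∈ w.leN m := by
  induction m, h using Int.leInduction with
  | base => exact hX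
  | succ k _ ih =>
    exact w.mem_le_of_iso ((shiftFunctorAdd' C (-k) (-1) (-(k + 1)) (by omega)).app X)
      (w.le_shift _ ih)

lemma hom_eq_zero {X Y : C} {a b : ℤ} (hab : a + 1 = b) (hX : X ∈ w.leN a) (hY : Y ∈ w.geN b)
    (f : X ⟶ Y) : f = 0 := by
  have hY' : Y⟦-a⟧⟦(-1 : ℤ)⟧ ∈ w.ge :=
    w.mem_ge_of_iso ((shiftFunctorAdd' C (-a) (-1) (-b) (by omega)).app Y).symm hY
  exact (shiftFunctor C (-a)).map_injective (by rw [w.orthogonal hX hY' (f⟦-a⟧'), Functor.map_zero])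

lemma exists_triangle_leN_geN (M : C) {a b : ℤ} (hab : a + 1 = b) :
    ∃ (A B : C) (f : A ⟶ M) (g : M ⟶ B) (δ : B ⟶ A⟦(1 : ℤ)⟧),
      Triangle.mk f g δ ∈ distTriang C ∧ A ∈ w.leN a ∧ B ∈ w.geN b := by
  obtain ⟨X, Y, f, g, h, hT, hX, hY⟩ := w.exists_decomp (M⟦-a⟧)
  refine ⟨X⟦a⟧, Y⟦a⟧, _, _, _, distinguished_mk_comp_iso₂ (Triangle.shift_distinguished _ hT a)
    ((shiftFunctorCompIsoId C (-a) a (neg_add_cancel a)).app M), ?_, ?_⟩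
  · exact w.mem_le_of_iso ((shiftFunctorCompIsoId C a (-a) (add_neg_cancel a)).app X) hX
  · exact w.mem_ge_of_iso ((shiftFunctorAdd' C a (-b) (-1) (by omega)).app Y).symm hY

lemma mem_leN_obj₂_of_mor₂_eq_zero {T : Triangle C} (hT : T ∈ distTriang C) {n : ℤ}
    (h₁ : T.obj₁ ∈ w.leN n) (h : T.mor₂ = 0) : T.obj₂ ∈ w.leN n := by
  obtain ⟨q, hq⟩ := Triangle.coyoneda_exact₂ T hT (𝟙 _) (by rw [h, comp_zero])
  exact w.mem_leN_of_retract q T.mor₁ hq.symm h₁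

lemma mem_leN_obj₂ {T : Triangle C} (hT : T ∈ distTriang C) {n : ℤ}
    (h₁ : T.obj₁ ∈ w.leN n) (h₃ : T.obj₃ ∈ w.leN n) : T.obj₂ ∈ w.leN n := by
  obtain ⟨A, B, f, g, δ, hT', hA, hB⟩ := w.exists_triangle_leN_geN T.obj₂ rfl
  obtain ⟨z, hz⟩ := Triangle.yoneda_exact₂ T hT g (w.hom_eq_zero rfl h₁ hB _)
  have hg : g = 0 := by rw [hz, w.hom_eq_zero rfl h₃ hB z, comp_zero]
  exact w.mem_leN_obj₂_of_mor₂_eq_zero hT' hA hg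

end WeightStructure

lemma isSplitMono_of_isSplitMono_map {C D : Type*} [Category C] [Category D] (r : C ⥤ D)
    (P : Set C)
    (hfull : ∀ X Y : C, X ∈ P → Y ∈ P → ∀ g : r.obj X ⟶ r.obj Y, ∃ f : X ⟶ Y, r.map f = g)
    (hcons : ∀ X Y : C, X ∈ P → Y ∈ P → ∀ f : X ⟶ Y, IsIso (r.map f) → IsIso f)
    {X Y : C} (hX : X ∈ P) (hY : Y ∈ P) (φ : X ⟶ Y) [IsSplitMono (r.map φ)] :
    IsSplitMono φ := by
  obtain ⟨ψ, hψ⟩ := hfull Y X hY hX (retraction (r.map φ))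
  have : IsIso (φ ≫ ψ) := hcons X X hX hX _ (by rw [r.map_comp, hψ, IsSplitMono.id]; infer_instance)
  exact IsSplitMono.mk' ⟨ψ ≫ inv (φ ≫ ψ), by rw [← Category.assoc, IsIso.hom_inv_id]⟩

section Reflection

variable {C₁ : Type*} [Category C₁] [Preadditive C₁] [HasZeroObject C₁] [HasShift C₁ ℤ]
  [∀ n : ℤ, (shiftFunctor C₁ n).Additive] [Pretriangulated C₁]
  {C₂ : Type*} [Category C₂] [Preadditive C₂] [HasZeroObject C₂] [HasShift C₂ ℤ]
  [∀ n : ℤ, (shiftFunctor C₂ n).Additive] [Pretriangulated C₂]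
  {w₁ : WeightStructure C₁} {w₂ : WeightStructure C₂} {r : C₁ ⥤ C₂} [r.CommShift ℤ]

lemma WeightExact.map_mem_leN (hwe : WeightExact w₁ w₂ r) {X : C₁} {n : ℤ}
    (h : X ∈ w₁.leN n) : r.obj X ∈ w₂.leN n :=
  w₂.mem_le_of_iso ((r.commShiftIso (-n)).app X).symm (hwe.1 _ h)

lemma WeightExact.map_mem_geN (hwe : WeightExact w₁ w₂ r) {X : C₁} {n : ℤ}
    (h : X ∈ w₁.geN n) : r.obj X ∈ w₂.geN n :=
  w₂.mem_ge_of_iso ((r.commShiftIso (-n)).app X).symm (hwe.2 _ h)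

lemma mono_map_mor₃_of_map_mor₂_eq_zero [r.IsTriangulated] {T : Triangle C₁}
    (hT : T ∈ distTriang C₁) (h : r.map T.mor₂ = 0) : Mono (r.map T.mor₃) :=
  have : Mono (r.map T.mor₃ ≫ (r.commShiftIso (1 : ℤ)).hom.app T.obj₁) :=
    Triangle.mono₃ _ (r.map_distinguished T hT) h
  mono_of_mono _ ((r.commShiftIso (1 : ℤ)).hom.app T.obj₁)

variable [r.IsTriangulated] (hwe : WeightExact w₁ w₂ r)
  (hfull : ∀ X Y : C₁, X ∈ w₁.heart → Y ∈ w₁.heart →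
    ∀ g : r.obj X ⟶ r.obj Y, ∃ f : X ⟶ Y, r.map f = g)
  (hcons : ∀ X Y : C₁, X ∈ w₁.heart → Y ∈ w₁.heart →
    ∀ f : X ⟶ Y, IsIso (r.map f) → IsIso f)
include hwe hfull hcons

lemma mem_leN_neg_one_of_mem_leN_zero_of_map {M : C₁} (hM : M ∈ w₁.leN 0)
    (hrM : r.obj M ∈ w₂.leN (-1)) : M ∈ w₁.leN (-1) := by
  obtain ⟨A, B, f, g, δ, hT, hA, hB⟩ := w₁.exists_triangle_leN_geN M (neg_add_cancel 1)
  have hA₁ : A⟦(1 : ℤ)⟧ ∈ w₁.leN 0 := (w₁.mem_leN_iff_shift A (neg_add_cancel 1)).1 hA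
  have hB₀ : B ∈ w₁.heart := ⟨w₁.mem_leN_obj₂ (rot_of_distTriang _ hT) hM hA₁, hB⟩
  obtain ⟨A', H, f', p, d, hT', hA', hH⟩ :=
    w₁.exists_triangle_leN_geN (A⟦(1 : ℤ)⟧) (neg_add_cancel 1)
  have hH₀ : H ∈ w₁.heart := ⟨w₁.mem_leN_obj₂ (rot_of_distTriang _ hT') hA₁
    ((w₁.mem_leN_iff_shift A' (neg_add_cancel 1)).1 hA'), hH⟩
  have : Mono (r.map δ) := mono_map_mor₃_of_map_mor₂_eq_zero hT
    (w₂.hom_eq_zero (neg_add_cancel 1) hrM (hwe.map_mem_geN hB) _)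
  have := isSplitMono_of_mono (r.map δ)
  obtain ⟨σ, hσ⟩ : ∃ σ : r.obj H ⟶ r.obj B, retraction (r.map δ) = r.map p ≫ σ :=
    Triangle.yoneda_exact₂ _ (r.map_distinguished _ hT') _
      (w₂.hom_eq_zero (neg_add_cancel 1) (hwe.map_mem_leN hA') (hwe.map_mem_geN hB) _)
  have : IsSplitMono (r.map (δ ≫ p)) :=
    IsSplitMono.mk' ⟨σ, by rw [r.map_comp, Category.assoc, ← hσ, IsSplitMono.id]⟩
  have := isSplitMono_of_isSplitMono_map r w₁.heart hfull hcons hB₀ hH₀ (δ ≫ p)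
  have : Mono δ := mono_of_mono δ p
  exact w₁.mem_leN_obj₂_of_mor₂_eq_zero hT hA (Triangle.mor₂_eq_zero_of_mono₃ _ hT this)

lemma mem_leN_of_mem_leN_add_one_of_map_mem_leN {M : C₁} {m : ℤ} (hM : M ∈ w₁.leN (m + 1))
    (hrM : r.obj M ∈ w₂.leN m) : M ∈ w₁.leN m := by
  have hshift : m + -(m + 1) = -1 := by ring
  refine (w₁.mem_leN_iff_shift M hshift).2 (mem_leN_neg_one_of_mem_leN_zero_of_map hwe hfull hcons
    ((w₁.mem_leN_iff_shift M (add_neg_cancel (m + 1))).1 hM) ?_)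
  exact w₂.mem_leN_of_iso ((r.commShiftIso (-(m + 1))).app M)
    ((w₂.mem_leN_iff_shift _ hshift).1 hrM)

lemma mem_leN_of_map_mem_leN {M : C₁} {n α : ℤ} (hM : M ∈ w₁.leN n)
    (hrM : r.obj M ∈ w₂.leN α) : M ∈ w₁.leN α := by
  rcases le_total n α with hnα | hαn
  · exact w₁.leN_mono hnα hM
  induction n, hαn using Int.leInduction with
  | base => exact hM
  | succ k hαk ih =>
    exact ih (mem_leN_of_mem_leN_add_one_of_map_mem_leN hwe hfull hcons hM
      (w₂.leN_mono hαk hrM))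

end Reflection

theorem statement5
    (F : Type*) [Field F] [CharZero F]
    {C₁ : Type*} [Category C₁] [Preadditive C₁] [HasZeroObject C₁] [HasShift C₁ ℤ]
    [∀ n : ℤ, (CategoryTheory.shiftFunctor C₁ n).Additive] [Pretriangulated C₁] [CategoryTheory.Linear F C₁]
    {C₂ : Type*} [Category C₂] [Preadditive C₂] [HasZeroObject C₂] [HasShift C₂ ℤ]
    [∀ n : ℤ, (CategoryTheory.shiftFunctor C₂ n).Additive] [Pretriangulated C₂] [CategoryTheory.Linear F C₂]
    (w₁ : WeightStructure C₁) (w₂ : WeightStructure C₂)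
    (r : C₁ ⥤ C₂) [r.Additive] [Functor.Linear F r] [r.CommShift ℤ] [r.IsTriangulated]
    (hbounded : w₁.Bounded)
    (hsemiprimary : SemiprimaryOn w₁.heart) (hpseudoabelian : PseudoAbelianOn w₁.heart)
    (hwe : WeightExact w₁ w₂ r)
    (hfull : ∀ X Y : C₁, X ∈ w₁.heart → Y ∈ w₁.heart →
      ∀ g : r.obj X ⟶ r.obj Y, ∃ f : X ⟶ Y, r.map f = g)
    (hcons : ∀ X Y : C₁, X ∈ w₁.heart → Y ∈ w₁.heart →
      ∀ f : X ⟶ Y, IsIso (r.map f) → IsIso f)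
    (M : C₁) (α : ℤ) :
    M ∈ w₁.leN α ↔ r.obj M ∈ w₂.leN α := by
  obtain ⟨-, n, -, -, hn⟩ := hbounded M
  exact ⟨hwe.map_mem_leN, mem_leN_of_map_mem_leN hwe hfull hcons hn⟩

end Paper
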